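/- Let G = (V, E, w, ⟨V_A, V_B⟩) be a game graph that contains no closed walk of strictly negative total weight, and let n = |V|. Then for every u ∈ V, e*_n(u) = e*(u), where e*_n(u) is the value of the n-round game at u and e*(u) is the value of the infinite-duration game at u, defined by e*(u) := min_σ max_τ max{0, −inf_{i ≥ 0} w(P_i)}, where σ : V_A → V and τ : V_B → V range over positional strategies, and P_i is the unique walk of length i starting at u in the graph G(σ, τ) in which every vertex of V_A keeps only the outgoing edge chosen by σ and every vertex of V_B keeps only the outgoing edge chosen by τ. -/

import Mathlib

/-!
Both values are compared with the Bellman iterates `b i`: `b 0 = 0`, and `b (i + 1) x` is the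
minimum (at Alice's vertices) or maximum (at Bob's) over the successors `v` of `x` of
`max 0 (b i v - w x v)`. Against any history-dependent strategy of Alice, Bob can force energy
`b i u` within `i` rounds, so `b i ≤ e*_i`.

Without negative closed walks the iteration is stationary from `n = |V|` on: a vertex where
`b (n + 1) > b n` starts a walk of `n` steps along which such a gain persists one level lower at
every step, and the closed walk between two visits of the same vertex would have negative weight.
If Alice always moves to a successor minimising the fixed point `b n`, then `b n (P i)` is at most
`b n u + w(P i)`, so `e* ≤ b n`. Conversely, if Alice plays a positional strategy in the `n`-round
game, the prefix of the play of least weight can be shortened, by cutting out closed walks, to a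
path without repeated vertices, and Bob has a positional strategy following that path; hence
`e*_n ≤ e*`.
-/

open scoped Classical

/-- `IsWalk E u k`: the sequence `u 0, u 1, …, u k` is a walk in the directed
graph with edge relation `E`. -/
def IsWalk {V : Type*} (E : V → V → Prop) (u : ℕ → V) (k : ℕ) : Prop :=
  ∀ i < k, E (u i) (u (i + 1))

/-- The total weight of the walk `u 0, …, u k`. -/
def walkWeight {V : Type*} (w : V → V → ℤ) (u : ℕ → V) (k : ℕ) : ℤ :=
  ∑ i ∈ Finset.range k, w (u i) (u (i + 1))

/-- A (history-dependent) strategy is a map from nonempty histories to vertices.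
A history `x_0 ⋯ x_j` is encoded as the list `[x_j, …, x_0]` (most recent first).
`AliceStrat E VA σ` says: for every history ending (currently) at a vertex
`x ∈ V_A`, the strategy moves along an edge of the graph. -/
def AliceStrat {V : Type*} (E : V → V → Prop) (VA : Set V) (σ : List V → V) : Prop :=
  ∀ (x : V) (h : List V), x ∈ VA → E x (σ (x :: h))

/-- A strategy for Bob: Bob controls the vertices of `V_B = V_Aᶜ`. -/
def BobStrat {V : Type*} (E : V → V → Prop) (VA : Set V) (τ : List V → V) : Prop :=
  ∀ (x : V) (h : List V), x ∉ VA → E x (τ (x :: h))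

/-- Auxiliary: the pair (current vertex, reversed history of previous vertices)
after `k` rounds of play from `u` with strategies `σ` (Alice, on `V_A`) and
`τ` (Bob, on `V_B = V_Aᶜ`). -/
noncomputable def playAux {V : Type*} (VA : Set V) (σ τ : List V → V) (u : V) :
    ℕ → V × List V
  | 0 => (u, [])
  | k + 1 =>
    let p := playAux VA σ τ u k
    (if p.1 ∈ VA then σ (p.1 :: p.2) else τ (p.1 :: p.2), p.1 :: p.2)

/-- `play VA σ τ u k` is the vertex `u_k` of the consistent path
`u_0 = u, u_1, u_2, …` with respect to the strategies `σ` and `τ`. -/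
noncomputable def play {V : Type*} (VA : Set V) (σ τ : List V → V) (u : V) (k : ℕ) : V :=
  (playAux VA σ τ u k).1

/-- `eVal w VA i σ τ u = max {0, - min_{0 ≤ j ≤ i} Σ_{k<j} w(u_k, u_{k+1})}`,
the minimum over all prefixes of the consistent path of length `i` from `u`. -/
noncomputable def eVal {V : Type*} (w : V → V → ℤ) (VA : Set V) (i : ℕ)
    (σ τ : List V → V) (u : V) : ℤ :=
  max 0 (-(Finset.range (i + 1)).inf' ⟨0, Finset.mem_range.mpr (Nat.succ_pos i)⟩
    (fun j => walkWeight w (play VA σ τ u) j))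

/-- The value `e*_i(u)` of the `i`-round game at `u`:
`min_σ max_τ e_{σ,τ}(u)` over all (history-dependent) strategies. -/
noncomputable def eStar {V : Type*} (E : V → V → Prop) (w : V → V → ℤ)
    (VA : Set V) (i : ℕ) (u : V) : ℤ :=
  sInf {x : ℤ | ∃ σ, AliceStrat E VA σ ∧
    x = sSup {y : ℤ | ∃ τ, BobStrat E VA τ ∧ y = eVal w VA i σ τ u}}

/-- The play from `u` when both players use positional strategies: `s : V → V`
for Alice (on `V_A`) and `t : V → V` for Bob (on `V_B = V_Aᶜ`).  This is the
unique walk starting at `u` in the graph `G(s, t)` where every vertex keeps only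
the outgoing edge chosen by its controller. -/
noncomputable def posPlay {V : Type*} (VA : Set V) (s t : V → V) (u : V) : ℕ → V
  | 0 => u
  | k + 1 =>
    let x := posPlay VA s t u k
    if x ∈ VA then s x else t x

/-- The outcome `max {0, - inf_{i ≥ 0} w(P_i)}` of the infinite-duration game
from `u` under positional strategies `s` (Alice) and `t` (Bob), where `P_i` is
the unique walk of length `i` from `u` in `G(s, t)`. -/
noncomputable def posOutcome {V : Type*} (w : V → V → ℤ) (VA : Set V)
    (s t : V → V) (u : V) : ℤ :=
  max 0 (-sInf {z : ℤ | ∃ i : ℕ, z = walkWeight w (posPlay VA s t u) i})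

/-- The value `e*(u)` of the infinite-duration energy game at `u`:
`min_σ max_τ max {0, - inf_{i ≥ 0} w(P_i)}` over positional strategies. -/
noncomputable def eStarInf {V : Type*} (E : V → V → Prop) (w : V → V → ℤ)
    (VA : Set V) (u : V) : ℤ :=
  sInf {x : ℤ | ∃ s : V → V, (∀ v ∈ VA, E v (s v)) ∧
    x = sSup {y : ℤ | ∃ t : V → V, (∀ v ∉ VA, E v (t v)) ∧ y = posOutcome w VA s t u}}

open Finset

lemma Int.sSup_nonneg {s : Set ℤ} (h : ∀ x ∈ s, 0 ≤ x) : 0 ≤ sSup s := by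
  rcases s.eq_empty_or_nonempty with rfl | ⟨x, hx⟩
  · rw [Int.csSup_empty]
  by_cases hb : BddAbove s
  · exact (h x hx).trans (le_csSup hb hx)
  · rw [Int.csSup_of_not_bddAbove hb]

section Walks

variable {V : Type*}

def ClosedWalksNonneg (E : V → V → Prop) (w : V → V → ℤ) : Prop :=
  ∀ (c : ℕ → V) (m : ℕ), 1 ≤ m → IsWalk E c m → c m = c 0 → 0 ≤ walkWeight w c m

variable (w : V → V → ℤ)

lemma ClosedWalksNonneg.mono {E E' : V → V → Prop} (h : ∀ x y, E' x y → E x y)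
    (hE : ClosedWalksNonneg E w) : ClosedWalksNonneg E' w :=
  fun c m hm hc hcl => hE c m hm (fun i hi => h _ _ (hc i hi)) hcl

lemma walkWeight_zero (p : ℕ → V) : walkWeight w p 0 = 0 := sum_range_zero _

lemma walkWeight_succ' (p : ℕ → V) (k : ℕ) :
    walkWeight w p (k + 1) = w (p 0) (p 1) + walkWeight w (fun i => p (i + 1)) k := by
  rw [walkWeight, sum_range_succ', add_comm]
  rfl

lemma walkWeight_add (p : ℕ → V) (m n : ℕ) :
    walkWeight w p (m + n) = walkWeight w p m + walkWeight w (fun i => p (m + i)) n := by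
  simp only [walkWeight, sum_range_add, add_assoc]

lemma walkWeight_congr {p q : ℕ → V} {k : ℕ} (h : ∀ i ≤ k, p i = q i) :
    walkWeight w p k = walkWeight w q k :=
  sum_congr rfl fun i hi => by rw [mem_range] at hi; rw [h i hi.le, h (i + 1) hi]

lemma sub_le_walkWeight {p : ℕ → V} {m : ℕ} (h : ℕ → ℤ)
    (hstep : ∀ i < m, h (i + 1) - h i ≤ w (p i) (p (i + 1))) : h m - h 0 ≤ walkWeight w p m := by
  rw [← sum_range_sub]
  exact sum_le_sum fun i hi => hstep i (mem_range.1 hi)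

lemma walkWeight_le_sub {p : ℕ → V} {m : ℕ} (h : ℕ → ℤ)
    (hstep : ∀ i < m, w (p i) (p (i + 1)) ≤ h (i + 1) - h i) : walkWeight w p m ≤ h m - h 0 := by
  rw [← sum_range_sub]
  exact sum_le_sum fun i hi => hstep i (mem_range.1 hi)

lemma exists_neg_le_weight [Finite V] : ∃ C : ℕ, ∀ x y, -(C : ℤ) ≤ w x y := by
  obtain ⟨M, hM⟩ := Finite.exists_le fun p : V × V => -w p.1 p.2
  exact ⟨M.toNat, fun x y => neg_le.1 ((hM (x, y)).trans (Int.self_le_toNat M))⟩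

lemma neg_mul_le_walkWeight {C : ℕ} (hC : ∀ x y, -(C : ℤ) ≤ w x y) (p : ℕ → V) (k : ℕ) :
    -(k * C : ℤ) ≤ walkWeight w p k := by
  have := card_nsmul_le_sum (range k) (fun i => w (p i) (p (i + 1))) _ fun i _ => hC _ _
  simpa [walkWeight] using this

variable {E : V → V → Prop}

lemma exists_shortcut (hE : ClosedWalksNonneg E w) {p : ℕ → V} {a d r : ℕ} (hd : 0 < d)
    (hp : IsWalk E p (a + d + r)) (hpa : p (a + d) = p a) :
    ∃ q : ℕ → V, IsWalk E q (a + r) ∧ q 0 = p 0 ∧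
      walkWeight w q (a + r) ≤ walkWeight w p (a + d + r) := by
  set q : ℕ → V := fun i => if i ≤ a then p i else p (i + d) with hq
  have hq_le : ∀ i ≤ a, q i = p i := fun i hi => if_pos hi
  have hq_add : ∀ j, q (a + j) = p (a + d + j) := by
    rintro (_ | j)
    · simp [hq, hpa]
    · simp only [hq, if_neg (by omega : ¬a + (j + 1) ≤ a)]
      congr 1
      omega
  have hcycle : 0 ≤ walkWeight w (fun j => p (a + j)) d :=
    hE _ d hd (fun i hi => by simpa [add_assoc] using hp (a + i) (by omega)) (by simpa using hpa)
  refine ⟨q, fun i hi => ?_, hq_le 0 (Nat.zero_le a), ?_⟩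
  · rcases lt_or_ge i a with hia | hia
    · rw [hq_le i hia.le, hq_le (i + 1) hia]
      exact hp i (by omega)
    · obtain ⟨j, rfl⟩ := Nat.exists_eq_add_of_le hia
      rw [hq_add j, show a + j + 1 = a + (j + 1) by omega, hq_add (j + 1)]
      exact hp (a + d + j) (by omega)
  · rw [walkWeight_add w q a r, walkWeight_congr w hq_le, funext hq_add,
      walkWeight_add w p (a + d), walkWeight_add w p a d]
    linarith

lemma exists_injective_walk_walkWeight_le (hE : ClosedWalksNonneg E w) (p : ℕ → V) (k : ℕ)
    (hp : IsWalk E p k) :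
    ∃ (q : ℕ → V) (m : ℕ), IsWalk E q m ∧ q 0 = p 0 ∧ walkWeight w q m ≤ walkWeight w p k ∧
      ∀ a b, a < b → b ≤ m → q a ≠ q b := by
  induction k using Nat.strong_induction_on generalizing p with
  | _ k ih =>
  by_cases hrep : ∃ a b, a < b ∧ b ≤ k ∧ p a = p b
  · obtain ⟨a, b, hab, hbk, hpab⟩ := hrep
    obtain ⟨d, rfl⟩ := Nat.exists_eq_add_of_lt hab
    obtain ⟨r, rfl⟩ := Nat.exists_eq_add_of_le hbk
    obtain ⟨q, hq, hq0, hqw⟩ := exists_shortcut w hE d.succ_pos hp hpab.symm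
    obtain ⟨q', m, hq', hq'0, hq'w, hinj⟩ := ih (a + r) (by omega) q hq
    exact ⟨q', m, hq', hq'0.trans hq0, hq'w.trans hqw, hinj⟩
  · simp only [not_exists, not_and] at hrep
    exact ⟨p, k, hp, rfl, le_rfl, hrep⟩

lemma exists_lt_le_eq_of_card_le [Fintype V] (c : ℕ → V) {n : ℕ} (hn : Fintype.card V ≤ n) :
    ∃ a b, a < b ∧ b ≤ n ∧ c a = c b := by
  obtain ⟨x, y, hxy, hc⟩ := Fintype.exists_ne_map_eq_of_card_lt (fun i : Fin (n + 1) => c i)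
    (by simpa using Nat.lt_succ_of_le hn)
  rcases lt_or_gt_of_ne (Fin.val_injective.ne hxy) with h | h
  · exact ⟨x, y, h, Nat.lt_succ_iff.1 y.2, hc⟩
  · exact ⟨y, x, h, Nat.lt_succ_iff.1 x.2, hc.symm⟩

lemma exists_forall_neg_le_walkWeight [Fintype V] (hE : ClosedWalksNonneg E w) :
    ∃ B : ℕ, ∀ p k, IsWalk E p k → -(B : ℤ) ≤ walkWeight w p k := by
  obtain ⟨C, hC⟩ := exists_neg_le_weight w
  refine ⟨Fintype.card V * C, fun p k hp => ?_⟩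
  obtain ⟨q, m, -, -, hqw, hinj⟩ := exists_injective_walk_walkWeight_le w hE p k hp
  have hm : m ≤ Fintype.card V := by
    by_contra! h
    obtain ⟨a, b, hab, hbm, hq⟩ := exists_lt_le_eq_of_card_le q h.le
    exact hinj a b hab hbm hq
  have := neg_mul_le_walkWeight w hC q m
  have : (m * C : ℤ) ≤ Fintype.card V * C := by gcongr
  push_cast
  linarith

end Walks

section Plays

variable {V : Type*} (w : V → V → ℤ) (VA : Set V)

/-- Histories list the most recent vertex first, so `l ++ [u]` is the history `l` preceded by the
starting vertex `u`. -/
def residualStrategy (u : V) (σ : List V → V) : List V → V := fun l => σ (l ++ [u])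

lemma playAux_succ_eq_residualStrategy (σ τ : List V → V) (u : V) (k : ℕ) :
    playAux VA σ τ u (k + 1) =
      let p := playAux VA (residualStrategy u σ) (residualStrategy u τ) (play VA σ τ u 1) k
      (p.1, p.2 ++ [u]) := by
  induction k with
  | zero => rfl
  | succ k ih =>
    rw [playAux, ih]
    simp [playAux, residualStrategy]

lemma play_succ_eq_residualStrategy (σ τ : List V → V) (u : V) (k : ℕ) :
    play VA σ τ u (k + 1) =
      play VA (residualStrategy u σ) (residualStrategy u τ) (play VA σ τ u 1) k := by
  rw [play, playAux_succ_eq_residualStrategy]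
  rfl

lemma play_congr {σ₁ σ₂ τ₁ τ₂ : List V → V} (hσ : ∀ x h, σ₁ (x :: h) = σ₂ (x :: h))
    (hτ : ∀ x h, τ₁ (x :: h) = τ₂ (x :: h)) (u : V) : play VA σ₁ τ₁ u = play VA σ₂ τ₂ u := by
  have : ∀ k, playAux VA σ₁ τ₁ u k = playAux VA σ₂ τ₂ u k := by
    intro k
    induction k with
    | zero => rfl
    | succ k ih => simp only [playAux, ih, hσ, hτ]
  exact funext fun k => congrArg Prod.fst (this k)

lemma eVal_nonneg (i : ℕ) (σ τ : List V → V) (u : V) : 0 ≤ eVal w VA i σ τ u := le_max_left _ _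

lemma exists_eVal_eq (i : ℕ) (σ τ : List V → V) (u : V) :
    ∃ j ≤ i, eVal w VA i σ τ u = max 0 (-walkWeight w (play VA σ τ u) j) := by
  obtain ⟨j, hj, heq⟩ := exists_mem_eq_inf' nonempty_range_add_one
    (fun j => walkWeight w (play VA σ τ u) j)
  exact ⟨j, Nat.lt_succ_iff.1 (mem_range.1 hj), by rw [eVal, heq]⟩

lemma eVal_le_mul {C : ℕ} (hC : ∀ x y, -(C : ℤ) ≤ w x y) (i : ℕ) (σ τ : List V → V) (u : V) :
    eVal w VA i σ τ u ≤ i * C := by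
  obtain ⟨j, hj, heq⟩ := exists_eVal_eq w VA i σ τ u
  have := neg_mul_le_walkWeight w hC (play VA σ τ u) j
  have : (j * C : ℤ) ≤ i * C := by gcongr
  rw [heq]
  exact max_le (by positivity) (by linarith)

lemma inf'_walkWeight_succ (p : ℕ → V) (i : ℕ) :
    (range (i + 2)).inf' nonempty_range_add_one (fun j => walkWeight w p j) =
      min 0 (w (p 0) (p 1) + (range (i + 1)).inf' nonempty_range_add_one
        (fun j => walkWeight w (fun k => p (k + 1)) j)) := by
  apply le_antisymm
  · obtain ⟨j, hj, heq⟩ := exists_mem_eq_inf' nonempty_range_add_one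
      (fun j => walkWeight w (fun k => p (k + 1)) j)
    refine le_min ((inf'_le _ (by simp)).trans (walkWeight_zero w p).le) ?_
    rw [heq, ← walkWeight_succ']
    exact inf'_le _ (by simp at hj ⊢; omega)
  · refine le_inf' _ _ fun j hj => ?_
    rcases j with _ | j
    · exact (min_le_left _ _).trans (walkWeight_zero w p).ge
    · rw [walkWeight_succ']
      exact (min_le_right _ _).trans (by gcongr; exact inf'_le _ (by simp at hj ⊢; omega))

lemma eVal_succ (i : ℕ) (σ τ : List V → V) (u : V) :
    eVal w VA (i + 1) σ τ u =
      max 0 (eVal w VA i (residualStrategy u σ) (residualStrategy u τ) (play VA σ τ u 1) -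
        w u (play VA σ τ u 1)) := by
  have hnonpos : (range (i + 1)).inf' nonempty_range_add_one (fun j => walkWeight w
      (play VA (residualStrategy u σ) (residualStrategy u τ) (play VA σ τ u 1)) j) ≤ 0 :=
    (inf'_le _ (by simp)).trans (walkWeight_zero w _).le
  unfold eVal
  rw [inf'_walkWeight_succ, funext (play_succ_eq_residualStrategy VA σ τ u)]
  change _ = max 0 (max 0 _ - w (play VA σ τ u 0) _)
  omega

end Plays

section Strategies

variable {V : Type*} (E : V → V → Prop) (VA : Set V)

def withFirstMove (a : V → V) (τ : List V → V) : List V → V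
  | [x] => a x
  | l => τ l.dropLast

lemma AliceStrat.residualStrategy {σ : List V → V} (hσ : AliceStrat E VA σ) (u : V) :
    AliceStrat E VA (residualStrategy u σ) :=
  fun x h hx => hσ x (h ++ [u]) hx

lemma BobStrat.withFirstMove {a : V → V} {τ : List V → V} (ha : ∀ x ∉ VA, E x (a x))
    (hτ : BobStrat E VA τ) : BobStrat E VA (withFirstMove a τ) := by
  rintro x (_ | ⟨y, h⟩) hx
  · exact ha x hx
  · exact hτ x _ hx

lemma residualStrategy_withFirstMove (a : V → V) (τ : List V → V) (u x : V) (h : List V) :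
    residualStrategy u (withFirstMove a τ) (x :: h) = τ (x :: h) := by
  obtain ⟨y, t, ht⟩ := List.exists_cons_of_ne_nil (List.concat_ne_nil u h)
  change withFirstMove a τ (x :: (h ++ [u])) = _
  rw [ht]
  change τ (x :: y :: t).dropLast = _
  rw [← ht, ← List.cons_append, List.dropLast_concat]

variable {E} (hout : ∀ v : V, ∃ x, E v x)

noncomputable def defaultMove (x : V) : V := (hout x).choose

lemma defaultMove_spec (x : V) : E x (defaultMove hout x) := (hout x).choose_spec

lemma aliceStrat_defaultMove (x₀ : V) : AliceStrat E VA (fun l => defaultMove hout (l.headD x₀)) :=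
  fun x _ _ => defaultMove_spec hout x

lemma bobStrat_defaultMove (x₀ : V) : BobStrat E VA (fun l => defaultMove hout (l.headD x₀)) :=
  fun x _ _ => defaultMove_spec hout x

end Strategies

section Positional

variable {V : Type*} {E : V → V → Prop} (w : V → V → ℤ) (VA : Set V) {s t : V → V}

lemma isWalk_posPlay (hs : ∀ v ∈ VA, E v (s v)) (ht : ∀ v ∉ VA, E v (t v)) (u : V) (k : ℕ) :
    IsWalk E (posPlay VA s t u) k := by
  intro i _
  change E _ (if posPlay VA s t u i ∈ VA then _ else _)
  split_ifs with hx
  exacts [hs _ hx, ht _ hx]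

lemma posOutcome_le {u : V} {b : ℤ} (hb : 0 ≤ b) (h : ∀ i, -b ≤ walkWeight w (posPlay VA s t u) i) :
    posOutcome w VA s t u ≤ b :=
  max_le hb (neg_le.1 (le_csInf ⟨_, 0, rfl⟩ (by rintro _ ⟨i, rfl⟩; exact h i)))

lemma le_posOutcome {u : V} {B : ℤ} (hB : ∀ i, -B ≤ walkWeight w (posPlay VA s t u) i) (m : ℕ) :
    max 0 (-walkWeight w (posPlay VA s t u) m) ≤ posOutcome w VA s t u :=
  max_le_max le_rfl (neg_le_neg (csInf_le ⟨-B, by rintro _ ⟨i, rfl⟩; exact hB i⟩ ⟨m, rfl⟩))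

def prunedEdges (E : V → V → Prop) (VA : Set V) (s : V → V) (x y : V) : Prop :=
  E x y ∧ (x ∈ VA → y = s x)

lemma isWalk_play_prunedEdges (hs : ∀ v ∈ VA, E v (s v)) {τ : List V → V} (hτ : BobStrat E VA τ)
    (u : V) (k : ℕ) : IsWalk (prunedEdges E VA s) (play VA (fun l => s (l.headD u)) τ u) k := by
  intro i _
  simp only [play, playAux]
  split_ifs with hx
  exacts [⟨hs _ hx, fun _ => rfl⟩, ⟨hτ _ _ hx, fun h => absurd h hx⟩]

lemma exists_posPlay_eq (hout : ∀ v : V, ∃ x, E v x) {q : ℕ → V} {m : ℕ}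
    (hq : IsWalk (prunedEdges E VA s) q m) (hinj : ∀ a b, a < b → b ≤ m → q a ≠ q b) :
    ∃ t : V → V, (∀ v ∉ VA, E v (t v)) ∧ ∀ i ≤ m, posPlay VA s t (q 0) i = q i := by
  let t : V → V := fun x =>
    if h : ∃ i < m, q i = x then q (Nat.find h + 1) else defaultMove hout x
  have ht_q : ∀ i < m, t (q i) = q (i + 1) := by
    intro i hi
    have h : ∃ j < m, q j = q i := ⟨i, hi, rfl⟩
    have hfind : Nat.find h = i := by
      refine le_antisymm (Nat.find_min' h ⟨hi, rfl⟩) (not_lt.1 fun hlt => ?_)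
      exact hinj _ i hlt hi.le (Nat.find_spec h).2
    simp only [t, dif_pos h, hfind]
  refine ⟨t, fun x _ => ?_, fun i => ?_⟩
  · by_cases h : ∃ i < m, q i = x
    · obtain ⟨hlt, hx⟩ := Nat.find_spec h
      rw [← hx, ht_q _ hlt]
      exact (hq _ hlt).1
    · simpa [t, dif_neg h] using defaultMove_spec hout x
  · induction i with
    | zero => exact fun _ => rfl
    | succ i ih =>
      intro hi
      change (if posPlay VA s t (q 0) i ∈ VA then _ else _) = _
      rw [ih (by omega)]
      by_cases hx : q i ∈ VA
      · rw [if_pos hx]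
        exact ((hq i hi).2 hx).symm
      · rw [if_neg hx]
        exact ht_q i hi

end Positional

section Bellman

variable {V : Type*} [Fintype V] (E : V → V → Prop)

noncomputable def successors (x : V) : Finset V := univ.filter (E x)

lemma mem_successors {x v : V} : v ∈ successors E x ↔ E x v := by simp [successors]

variable {E}

lemma successors_nonempty (hout : ∀ v : V, ∃ x, E v x) (x : V) : (successors E x).Nonempty :=
  (hout x).imp fun _ => (mem_successors E).2

variable (w : V → V → ℤ) (VA : Set V) (hout : ∀ v : V, ∃ x, E v x)

noncomputable def bellmanStep (f : V → ℤ) (x : V) : ℤ :=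
  if x ∈ VA then (successors E x).inf' (successors_nonempty hout x) fun v => max 0 (f v - w x v)
  else (successors E x).sup' (successors_nonempty hout x) fun v => max 0 (f v - w x v)

noncomputable def bellman : ℕ → V → ℤ
  | 0 => 0
  | i + 1 => bellmanStep w VA hout (bellman i)

lemma bellmanStep_le_of_mem {x v : V} (hx : x ∈ VA) (hv : E x v) (f : V → ℤ) :
    bellmanStep w VA hout f x ≤ max 0 (f v - w x v) := by
  rw [bellmanStep, if_pos hx]
  exact inf'_le _ ((mem_successors E).2 hv)

lemma le_bellmanStep_of_not_mem {x v : V} (hx : x ∉ VA) (hv : E x v) (f : V → ℤ) :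
    max 0 (f v - w x v) ≤ bellmanStep w VA hout f x := by
  rw [bellmanStep, if_neg hx]
  exact le_sup' (fun v => max 0 (f v - w x v)) ((mem_successors E).2 hv)

lemma exists_bellmanStep_eq (f : V → ℤ) (x : V) :
    ∃ v, E x v ∧ bellmanStep w VA hout f x = max 0 (f v - w x v) := by
  unfold bellmanStep
  split_ifs
  · obtain ⟨v, hv, heq⟩ := exists_mem_eq_inf' (successors_nonempty hout x)
      fun v => max 0 (f v - w x v)
    exact ⟨v, (mem_successors E).1 hv, heq⟩
  · obtain ⟨v, hv, heq⟩ := exists_mem_eq_sup' (successors_nonempty hout x)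
      fun v => max 0 (f v - w x v)
    exact ⟨v, (mem_successors E).1 hv, heq⟩

lemma bellmanStep_nonneg (f : V → ℤ) (x : V) : 0 ≤ bellmanStep w VA hout f x := by
  obtain ⟨v, -, heq⟩ := exists_bellmanStep_eq w VA hout f x
  exact heq ▸ le_max_left _ _

lemma bellmanStep_mono : Monotone (bellmanStep w VA hout) := by
  intro f g hfg x
  have hstep : ∀ v, max 0 (f v - w x v) ≤ max 0 (g v - w x v) := fun v =>
    max_le_max le_rfl (sub_le_sub_right (hfg v) _)
  unfold bellmanStep
  split_ifs
  · exact inf'_mono_fun fun v _ => hstep v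
  · exact sup'_mono_fun fun v _ => hstep v

lemma bellman_monotone : Monotone (bellman w VA hout) := by
  refine monotone_nat_of_le_succ fun i => ?_
  induction i with
  | zero => exact fun x => bellmanStep_nonneg w VA hout _ x
  | succ i ih => exact bellmanStep_mono w VA hout ih

lemma exists_successor_bellmanStep_le (f : V → ℤ) {u a : V} (ha : u ∈ VA → E u a) :
    ∃ v, E u v ∧ (u ∈ VA → a = v) ∧ bellmanStep w VA hout f u ≤ max 0 (f v - w u v) := by
  by_cases hu : u ∈ VA
  · exact ⟨a, ha hu, fun _ => rfl, bellmanStep_le_of_mem w VA hout hu (ha hu) f⟩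
  · obtain ⟨v, hv, heq⟩ := exists_bellmanStep_eq w VA hout f u
    exact ⟨v, hv, fun h => absurd h hu, heq.le⟩

lemma exists_successor_bellmanStep_sandwich (f g : V → ℤ) (x : V) :
    ∃ v, E x v ∧ bellmanStep w VA hout g x ≤ max 0 (g v - w x v) ∧
      max 0 (f v - w x v) ≤ bellmanStep w VA hout f x := by
  by_cases hx : x ∈ VA
  · obtain ⟨v, hv, heq⟩ := exists_bellmanStep_eq w VA hout f x
    exact ⟨v, hv, bellmanStep_le_of_mem w VA hout hx hv g, heq.ge⟩
  · obtain ⟨v, hv, heq⟩ := exists_bellmanStep_eq w VA hout g x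
    exact ⟨v, hv, heq.le, le_bellmanStep_of_not_mem w VA hout hx hv f⟩

lemma exists_bellman_descent {k : ℕ} {x : V} (hk : 0 < k)
    (hx : bellman w VA hout k x < bellman w VA hout (k + 1) x) :
    ∃ v, E x v ∧ bellman w VA hout (k + 1) x + w x v ≤ bellman w VA hout k v ∧
      bellman w VA hout (k - 1) v < bellman w VA hout k v := by
  obtain ⟨j, rfl⟩ : ∃ j, k = j + 1 := ⟨k - 1, by omega⟩
  obtain ⟨v, hv, hup, hlow⟩ := exists_successor_bellmanStep_sandwich w VA hout
    (bellman w VA hout j) (bellman w VA hout (j + 1)) x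
  have hpos := bellmanStep_nonneg w VA hout (bellman w VA hout j) x
  change bellmanStep w VA hout (bellman w VA hout j) x <
    bellmanStep w VA hout (bellman w VA hout (j + 1)) x at hx
  refine ⟨v, hv, ?_, ?_⟩
  · change bellmanStep w VA hout (bellman w VA hout (j + 1)) x + w x v ≤ _
    omega
  · rw [Nat.add_sub_cancel]
    omega

theorem bellman_card_succ (hE : ClosedWalksNonneg E w) :
    bellman w VA hout (Fintype.card V + 1) = bellman w VA hout (Fintype.card V) := by
  set n := Fintype.card V
  funext x
  refine le_antisymm ?_ (bellman_monotone w VA hout n.le_succ x)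
  by_contra! hgain
  choose! next hnext using fun k y => exists_bellman_descent w VA hout (k := k) (x := y)
  let c : ℕ → V := fun i => Nat.rec x (fun j y => next (n - j) y) i
  have hchain : ∀ i ≤ n, bellman w VA hout (n - i) (c i) < bellman w VA hout (n - i + 1) (c i) := by
    intro i
    induction i with
    | zero => exact fun _ => hgain
    | succ i ih =>
      intro hi
      have := (hnext (n - i) (c i) (by omega) (ih (by omega))).2.2
      rwa [← Nat.sub_sub, Nat.sub_add_cancel (by omega : 1 ≤ n - i)]
  have hstep : ∀ i < n, E (c i) (c (i + 1)) ∧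
      bellman w VA hout (n - i + 1) (c i) + w (c i) (c (i + 1)) ≤
        bellman w VA hout (n - (i + 1) + 1) (c (i + 1)) := by
    intro i hi
    rw [show n - (i + 1) + 1 = n - i by omega]
    exact (hnext (n - i) (c i) (by omega) (hchain i hi.le)).imp_right And.left
  obtain ⟨a, b, hab, hbn, hcab⟩ := exists_lt_le_eq_of_card_le c le_rfl
  have hb : a + (b - a) = b := Nat.add_sub_cancel' hab.le
  have hcycle : 0 ≤ walkWeight w (fun j => c (a + j)) (b - a) :=
    hE _ _ (by omega) (fun j hj => (hstep (a + j) (by omega)).1) (by simp [hb, hcab])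
  have htele := walkWeight_le_sub w (p := fun j => c (a + j)) (m := b - a)
    (fun j => bellman w VA hout (n - (a + j) + 1) (c (a + j)))
    (fun j hj => by have := (hstep (a + j) (by omega)).2; simp only [← add_assoc]; linarith)
  simp only [hb, add_zero, ← hcab] at htele
  have hmono := bellman_monotone w VA hout (show n - b + 1 ≤ n - a by omega) (c a)
  have hgain_a := hchain a (by omega)
  linarith

end Bellman

section Values

variable {V : Type*} [Fintype V] {E : V → V → Prop} (w : V → V → ℤ) (VA : Set V)
  (hout : ∀ v : V, ∃ x, E v x)

lemma exists_bobStrat_bellman_le_eVal (i : ℕ) :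
    ∀ (σ : List V → V) (u : V), AliceStrat E VA σ →
      ∃ τ, BobStrat E VA τ ∧ bellman w VA hout i u ≤ eVal w VA i σ τ u := by
  induction i with
  | zero => exact fun σ u _ => ⟨_, bobStrat_defaultMove VA hout u, eVal_nonneg w VA 0 σ _ u⟩
  | succ i ih =>
    intro σ u hσ
    obtain ⟨v, huv, hσv, hle⟩ := exists_successor_bellmanStep_le w VA hout
      (bellman w VA hout i) (a := σ [u]) (hσ u [])
    obtain ⟨τ', hτ', hτ'v⟩ := ih (residualStrategy u σ) v (hσ.residualStrategy E VA u)
    set τ := withFirstMove (Function.update (defaultMove hout) u v) τ'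
    have hτ : BobStrat E VA τ := by
      refine BobStrat.withFirstMove E VA (fun x _ => ?_) hτ'
      rcases eq_or_ne x u with rfl | hx
      · simpa using huv
      · simpa [hx] using defaultMove_spec hout x
    have hplay : play VA σ τ u 1 = v := by
      change (if u ∈ VA then σ [u] else τ [u]) = v
      split_ifs with hu
      exacts [hσv hu, by simp [τ, withFirstMove]]
    have hres : eVal w VA i (residualStrategy u σ) (residualStrategy u τ) v =
        eVal w VA i (residualStrategy u σ) τ' v := by
      unfold eVal
      rw [play_congr VA (fun _ _ => rfl) (residualStrategy_withFirstMove _ τ' u) v]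
    refine ⟨τ, hτ, ?_⟩
    rw [eVal_succ, hplay, hres]
    exact hle.trans (max_le_max le_rfl (sub_le_sub_right hτ'v _))

lemma bellman_le_eStar (i : ℕ) (u : V) : bellman w VA hout i u ≤ eStar E w VA i u := by
  obtain ⟨C, hC⟩ := exists_neg_le_weight w
  refine le_csInf ⟨_, _, aliceStrat_defaultMove VA hout u, rfl⟩ ?_
  rintro _ ⟨σ, hσ, rfl⟩
  obtain ⟨τ, hτ, hle⟩ := exists_bobStrat_bellman_le_eVal w VA hout i σ u hσ
  refine hle.trans (le_csSup ⟨i * C, ?_⟩ ⟨τ, hτ, rfl⟩)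
  rintro _ ⟨τ, -, rfl⟩
  exact eVal_le_mul w VA hC i σ τ u

noncomputable def greedyMove (f : V → ℤ) (x : V) : V := (exists_bellmanStep_eq w VA hout f x).choose

lemma greedyMove_spec (f : V → ℤ) (x : V) :
    E x (greedyMove w VA hout f x) ∧ bellmanStep w VA hout f x =
      max 0 (f (greedyMove w VA hout f x) - w x (greedyMove w VA hout f x)) :=
  (exists_bellmanStep_eq w VA hout f x).choose_spec

variable {w VA hout}

lemma sub_le_weight_of_bellmanStep_eq {f : V → ℤ} (hf : bellmanStep w VA hout f = f) {t : V → V}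
    (ht : ∀ v ∉ VA, E v (t v)) (x : V) :
    f (if x ∈ VA then greedyMove w VA hout f x else t x) - f x ≤
      w x (if x ∈ VA then greedyMove w VA hout f x else t x) := by
  have hfx : bellmanStep w VA hout f x = f x := congrFun hf x
  split_ifs with hx
  · have := (greedyMove_spec w VA hout f x).2
    omega
  · have := le_bellmanStep_of_not_mem w VA hout hx (ht x hx) f
    omega

lemma posOutcome_greedyMove_le {f : V → ℤ} (hf : bellmanStep w VA hout f = f) {t : V → V}
    (ht : ∀ v ∉ VA, E v (t v)) (u : V) : posOutcome w VA (greedyMove w VA hout f) t u ≤ f u := by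
  have hf_nonneg : ∀ x, 0 ≤ f x := fun x => by
    rw [← hf]
    exact bellmanStep_nonneg w VA hout f x
  refine posOutcome_le w VA (hf_nonneg u) fun k => ?_
  have hpot := sub_le_walkWeight w (p := posPlay VA (greedyMove w VA hout f) t u) (m := k)
    (fun i => f (posPlay VA (greedyMove w VA hout f) t u i))
    (fun i _ => sub_le_weight_of_bellmanStep_eq hf ht _)
  have := hf_nonneg (posPlay VA (greedyMove w VA hout f) t u k)
  change _ - f u ≤ _ at hpot
  linarith

lemma eStarInf_le_of_bellmanStep_eq {f : V → ℤ} (hf : bellmanStep w VA hout f = f) (u : V) :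
    eStarInf E w VA u ≤ f u := by
  unfold eStarInf
  refine le_trans (csInf_le ⟨0, ?_⟩
    ⟨greedyMove w VA hout f, fun v _ => (greedyMove_spec w VA hout f v).1, rfl⟩)
    (csSup_le ⟨_, defaultMove hout, fun v _ => defaultMove_spec hout v, rfl⟩ ?_)
  · rintro _ ⟨s, -, rfl⟩
    exact Int.sSup_nonneg (by rintro _ ⟨t, -, rfl⟩; exact le_max_left _ _)
  · rintro _ ⟨t, ht, rfl⟩
    exact posOutcome_greedyMove_le hf ht u

lemma exists_eVal_le_posOutcome (hout : ∀ v : V, ∃ x, E v x) (hE : ClosedWalksNonneg E w)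
    {s : V → V} (hs : ∀ v ∈ VA, E v (s v)) {τ : List V → V} (hτ : BobStrat E VA τ) (i : ℕ) (u : V) :
    ∃ t : V → V, (∀ v ∉ VA, E v (t v)) ∧
      eVal w VA i (fun l => s (l.headD u)) τ u ≤ posOutcome w VA s t u := by
  obtain ⟨j, -, hj⟩ := exists_eVal_eq w VA i (fun l => s (l.headD u)) τ u
  obtain ⟨q, m, hq, hq0 : q 0 = u, hqw, hinj⟩ := exists_injective_walk_walkWeight_le w
    (hE.mono w fun _ _ h => h.1) _ j (isWalk_play_prunedEdges VA hs hτ u j)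
  obtain ⟨t, ht, hplay⟩ := exists_posPlay_eq VA hout hq hinj
  rw [hq0] at hplay
  obtain ⟨B, hB⟩ := exists_forall_neg_le_walkWeight w hE
  refine ⟨t, ht, ?_⟩
  calc eVal w VA i (fun l => s (l.headD u)) τ u
      ≤ max 0 (-walkWeight w (posPlay VA s t u) m) := by
        rw [hj, walkWeight_congr w hplay]
        exact max_le_max le_rfl (neg_le_neg hqw)
    _ ≤ posOutcome w VA s t u :=
        le_posOutcome w VA (fun k => hB _ k (isWalk_posPlay VA hs ht u k)) m

lemma eStar_le_eStarInf (hout : ∀ v : V, ∃ x, E v x) (hE : ClosedWalksNonneg E w) (i : ℕ) (u : V) :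
    eStar E w VA i u ≤ eStarInf E w VA u := by
  obtain ⟨B, hB⟩ := exists_forall_neg_le_walkWeight w hE
  refine le_csInf ⟨_, defaultMove hout, fun v _ => defaultMove_spec hout v, rfl⟩ ?_
  rintro _ ⟨s, hs, rfl⟩
  have hσ : AliceStrat E VA (fun l => s (l.headD u)) := fun x _ hx => hs x hx
  unfold eStar
  refine le_trans (csInf_le ⟨0, ?_⟩ ⟨_, hσ, rfl⟩)
    (csSup_le ⟨_, _, bobStrat_defaultMove VA hout u, rfl⟩ ?_)
  · rintro _ ⟨σ, -, rfl⟩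
    exact Int.sSup_nonneg (by rintro _ ⟨τ, -, rfl⟩; exact eVal_nonneg w VA i σ τ u)
  · rintro _ ⟨τ, hτ, rfl⟩
    obtain ⟨t, ht, hle⟩ := exists_eVal_le_posOutcome hout hE hs hτ i u
    refine hle.trans (le_csSup ⟨B, ?_⟩ ⟨t, ht, rfl⟩)
    rintro _ ⟨t, ht, rfl⟩
    exact posOutcome_le w VA (Int.natCast_nonneg B) fun k => hB _ k (isWalk_posPlay VA hs ht u k)

end Values

/-- In a game graph with no closed walk of strictly negative
total weight, the value of the `n`-round game (with `n = |V|`) equals the value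
of the infinite-duration energy game, at every vertex. -/
theorem n_round_game_eq_infinite_game {V : Type*} [Fintype V]
    (E : V → V → Prop) (w : V → V → ℤ) (VA : Set V)
    (hout : ∀ v : V, ∃ x, E v x)
    (hnoneg : ∀ (c : ℕ → V) (m : ℕ), 1 ≤ m → IsWalk E c m → c m = c 0 →
      0 ≤ walkWeight w c m)
    (u : V) :
    eStar E w VA (Fintype.card V) u = eStarInf E w VA u := by
  have hfix : bellmanStep w VA hout (bellman w VA hout (Fintype.card V)) =
      bellman w VA hout (Fintype.card V) :=
    bellman_card_succ w VA hout hnoneg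
  exact le_antisymm (eStar_le_eStarInf hout hnoneg _ u)
    ((eStarInf_le_of_bellmanStep_eq hfix u).trans (bellman_le_eStar w VA hout _ u))
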